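/- arXiv:1911.02377 — 4 statements merged into one kernel-verified Lean document; each statement's English description precedes it below -/
import Mathlib

section
/- (Proposition 2.) Let E be a finite-dimensional real inner product space and let J : E → ℝ be differentiable with L-Lipschitz gradient (‖∇J(x) − ∇J(y)‖ ≤ L‖x − y‖ for all x, y), where L > 0. Let η > 0, let θ ∈ E, let e ∈ E, and let Δ : E → E be an invertible symmetric linear map satisfying ⟨Δ v, v⟩ ≥ (1/η)‖v‖² for all v ∈ E. Define the Newton-type update θ⁺ = θ − Δ⁻¹(∇J(θ) − e) and set γ = θ⁺ − θ. Then J(θ) − J(θ⁺) ≥ ((2 − Lη)/(2η)) ‖γ‖² − ‖e‖ · ‖γ‖. -/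
/-!
With `γ = θ⁺ - θ` the update says `∇J(θ) = e - Δ γ`. The descent lemma for an `L`-smooth function,
`J(θ + γ) ≤ J(θ) + ⟪∇J(θ), γ⟫ + L/2 ‖γ‖²`, then gives
`J(θ) - J(θ⁺) ≥ ⟪Δ γ, γ⟫ - ⟪e, γ⟫ - L/2 ‖γ‖²`, and the bound follows from
`⟪Δ γ, γ⟫ ≥ ‖γ‖² / η` and Cauchy–Schwarz for `⟪e, γ⟫`.
-/

open Set
open scoped RealInnerProductSpace NNReal

section DescentLemma

variable {E : Type*} [NormedAddCommGroup E] [InnerProductSpace ℝ E] [CompleteSpace E]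

theorem HasGradientAt.hasDerivAt_comp_add_smul {f : E → ℝ} {g x v : E} {t : ℝ}
    (hf : HasGradientAt f g (x + t • v)) :
    HasDerivAt (fun s : ℝ => f (x + s • v)) ⟪g, v⟫ t := by
  have hline : HasDerivAt (fun s : ℝ => x + s • v) v t := by
    simpa using ((hasDerivAt_id t).smul_const v).const_add x
  have hcomp := hf.hasFDerivAt.comp_hasDerivAt t hline
  simp only [Function.comp_def, InnerProductSpace.toDual_apply_apply] at hcomp
  exact hcomp

omit [CompleteSpace E] in
theorem LipschitzWith.inner_apply_add_smul_sub_le {K : ℝ≥0} {g : E → E}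
    (hg : LipschitzWith K g) (x v : E) {t : ℝ} (ht : 0 ≤ t) :
    ⟪g (x + t • v) - g x, v⟫ ≤ K * t * ‖v‖ ^ 2 :=
  calc ⟪g (x + t • v) - g x, v⟫ ≤ ‖g (x + t • v) - g x‖ * ‖v‖ := real_inner_le_norm _ _
    _ ≤ K * ‖(x + t • v) - x‖ * ‖v‖ := by
        gcongr
        simpa only [dist_eq_norm] using hg.dist_le_mul (x + t • v) x
    _ = K * t * ‖v‖ ^ 2 := by
        rw [add_sub_cancel_left, norm_smul, Real.norm_of_nonneg ht]
        ring

theorem apply_add_le_of_lipschitzWith_gradient {f : E → ℝ} {K : ℝ≥0}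
    (hf : Differentiable ℝ f) (hK : LipschitzWith K (gradient f)) (x v : E) :
    f (x + v) ≤ f x + ⟪gradient f x, v⟫ + K / 2 * ‖v‖ ^ 2 := by
  set φ : ℝ → ℝ := fun t => f (x + t • v) - t * ⟪gradient f x, v⟫ - K / 2 * t ^ 2 * ‖v‖ ^ 2
  have hφ' : ∀ t,
      HasDerivAt φ (⟪gradient f (x + t • v) - gradient f x, v⟫ - K * t * ‖v‖ ^ 2) t := by
    intro t
    have hcomp := (hf (x + t • v)).hasGradientAt.hasDerivAt_comp_add_smul
    refine ((hcomp.sub ((hasDerivAt_id t).mul_const ⟪gradient f x, v⟫)).sub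
      (((hasDerivAt_pow 2 t).const_mul (K / 2 : ℝ)).mul_const (‖v‖ ^ 2))).congr_deriv ?_
    rw [inner_sub_left]
    simp only [Nat.cast_ofNat]
    ring
  have hφ_anti : AntitoneOn φ (Icc 0 1) := by
    refine antitoneOn_of_hasDerivWithinAt_nonpos (convex_Icc 0 1)
      (fun t _ => (hφ' t).continuousAt.continuousWithinAt)
      (fun t _ => (hφ' t).hasDerivWithinAt) fun t ht => ?_
    rw [interior_Icc] at ht
    exact sub_nonpos.2 (hK.inner_apply_add_smul_sub_le x v ht.1.le)
  have h01 := hφ_anti (left_mem_Icc.2 zero_le_one) (right_mem_Icc.2 zero_le_one) zero_le_one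
  simp only [φ, one_smul, zero_smul, add_zero] at h01
  linarith

end DescentLemma

theorem newton_step_decrease_general
    {E : Type*} [NormedAddCommGroup E] [InnerProductSpace ℝ E] [FiniteDimensional ℝ E]
    (J : E → ℝ) (L : ℝ) (hL : 0 < L)
    (hJd : Differentiable ℝ J)
    (hlip : ∀ x y : E, ‖gradient J x - gradient J y‖ ≤ L * ‖x - y‖)
    (η : ℝ) (hη : 0 < η)
    (θ e : E) (Δ : E ≃ₗ[ℝ] E)
    (hlower : ∀ v : E, (1 / η) * ‖v‖ ^ 2 ≤ ⟪Δ v, v⟫) :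
    J θ - J (θ - Δ.symm (gradient J θ - e)) ≥
      ((2 - L * η) / (2 * η)) * ‖(θ - Δ.symm (gradient J θ - e)) - θ‖ ^ 2
        - ‖e‖ * ‖(θ - Δ.symm (gradient J θ - e)) - θ‖ := by
  rw [sub_eq_add_neg θ, add_sub_cancel_left]
  set γ : E := -Δ.symm (gradient J θ - e)
  have hgrad : gradient J θ = e - Δ γ := by
    rw [map_neg, LinearEquiv.apply_symm_apply, sub_neg_eq_add, add_sub_cancel]
  have hgradLip : LipschitzWith L.toNNReal (gradient J) :=
    LipschitzWith.of_dist_le' fun x y => by rw [dist_eq_norm, dist_eq_norm]; exact hlip x y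
  have hdescent := apply_add_le_of_lipschitzWith_gradient hJd hgradLip θ γ
  rw [hgrad, inner_sub_left, Real.coe_toNNReal L hL.le] at hdescent
  have hcoeff : (2 - L * η) / (2 * η) = 1 / η - L / 2 := by
    field_simp
  rw [hcoeff]
  linarith [real_inner_le_norm e γ, hlower γ]

/-- Proposition 2: per-iteration decrease bound for the Newton-type update
`θ⁺ = θ − Δ⁻¹(∇J(θ) − e)` with `γ = θ⁺ − θ`:
`J(θ) − J(θ⁺) ≥ ((2 − Lη)/(2η))‖γ‖² − ‖e‖‖γ‖`. -/
theorem newton_step_decrease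
    {E : Type*} [NormedAddCommGroup E] [InnerProductSpace ℝ E] [FiniteDimensional ℝ E]
    (J : E → ℝ) (L : ℝ) (hL : 0 < L)
    (hJd : Differentiable ℝ J)
    (hlip : ∀ x y : E, ‖gradient J x - gradient J y‖ ≤ L * ‖x - y‖)
    (η : ℝ) (hη : 0 < η)
    (θ e : E) (Δ : E ≃ₗ[ℝ] E)
    (hsym : ∀ u v : E, ⟪Δ u, v⟫ = ⟪u, Δ v⟫)
    (hlower : ∀ v : E, (1 / η) * ‖v‖ ^ 2 ≤ ⟪Δ v, v⟫) :
    J θ - J (θ - Δ.symm (gradient J θ - e)) ≥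
      ((2 - L * η) / (2 * η)) * ‖(θ - Δ.symm (gradient J θ - e)) - θ‖ ^ 2
        - ‖e‖ * ‖(θ - Δ.symm (gradient J θ - e)) - θ‖ :=
  newton_step_decrease_general J L hL hJd hlip η hη θ e Δ hlower
end

section
/- Let E be a finite-dimensional real inner product space and J : E → ℝ be differentiable with L-Lipschitz gradient (L > 0) and bounded from below (inf J > −∞). Let η > 0, and let (θ^m)_{m≥1} be a sequence in E generated by θ^{m+1} = θ^m − (Δ^m)⁻¹(∇J(θ^m) − e^m), where each Δ^m is an invertible symmetric linear map with ⟨Δ^m v, v⟩ ≥ (1/η)‖v‖² for all v, and ‖e^m‖ ≤ ε̄ for all m with ε̄ ≥ 0. Set γ^m = θ^{m+1} − θ^m. Then for every M ≥ 1, the partial sum ∑_{m=1}^{M} [ ((2 − Lη)/(2η)) ‖γ^m‖² − ε̄ ‖γ^m‖ ] ≤ J(θ¹) − inf J. -/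
open Finset
open scoped RealInnerProductSpace Gradient

/-!
The gradient step `γ = -Δ⁻¹(∇J(θ) - e)` satisfies `⟪∇J(θ), γ⟫ ≤ ε̄‖γ‖ - ‖γ‖²/η`, and the
descent lemma `J(θ + γ) ≤ J(θ) + ⟪∇J(θ), γ⟫ + (L/2)‖γ‖²` (proved by showing that
`t ↦ J(θ + tγ) - t⟪∇J(θ), γ⟫ - (L t²/2)‖γ‖²` has nonpositive derivative for `t ≥ 0`)
turns this into a decrease of `J` by `(1/η - L/2)‖γ‖² - ε̄‖γ‖` per iteration.
Summing telescopes to `J(θ¹) - J(θ^{M+1}) ≤ J(θ¹) - inf J`.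
-/

section Descent

variable {E : Type*} [NormedAddCommGroup E] [InnerProductSpace ℝ E] [CompleteSpace E]
  {f : E → ℝ}

theorem hasDerivAt_apply_add_smul {x v : E} {t : ℝ} (hf : DifferentiableAt ℝ f (x + t • v)) :
    HasDerivAt (fun s : ℝ => f (x + s • v)) ⟪∇ f (x + t • v), v⟫ t := by
  have hline : HasDerivAt (fun s : ℝ => x + s • v) v t := by
    simpa using ((hasDerivAt_id t).smul_const v).const_add x
  refine (hf.hasFDerivAt.comp_hasDerivAt t hline).congr_deriv ?_
  rw [← toDual_gradient, InnerProductSpace.toDual_apply_apply]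

theorem le_add_inner_gradient_add_of_lipschitz_gradient {L : ℝ} (hf : Differentiable ℝ f)
    (hlip : ∀ x y, ‖∇ f x - ∇ f y‖ ≤ L * ‖x - y‖) (x y : E) :
    f y ≤ f x + ⟪∇ f x, y - x⟫ + L / 2 * ‖y - x‖ ^ 2 := by
  set v := y - x
  let g : ℝ → ℝ := fun t => f (x + t • v) - t * ⟪∇ f x, v⟫ - L / 2 * t ^ 2 * ‖v‖ ^ 2
  have hg : ∀ t, HasDerivAt g (⟪∇ f (x + t • v) - ∇ f x, v⟫ - L * t * ‖v‖ ^ 2) t := by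
    intro t
    refine ((((hasDerivAt_apply_add_smul (x := x) (v := v) (hf _)).sub
      ((hasDerivAt_id t).mul_const ⟪∇ f x, v⟫)).sub
      (((hasDerivAt_pow 2 t).const_mul (L / 2)).mul_const (‖v‖ ^ 2)))).congr_deriv ?_
    rw [inner_sub_left]
    simp only [Nat.cast_ofNat]
    ring
  have hg' : ∀ t ∈ interior (Set.Ici (0 : ℝ)),
      ⟪∇ f (x + t • v) - ∇ f x, v⟫ - L * t * ‖v‖ ^ 2 ≤ 0 := by
    intro t ht
    rw [interior_Ici] at ht
    rw [sub_nonpos]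
    calc ⟪∇ f (x + t • v) - ∇ f x, v⟫
        ≤ ‖∇ f (x + t • v) - ∇ f x‖ * ‖v‖ := real_inner_le_norm _ _
      _ ≤ L * ‖x + t • v - x‖ * ‖v‖ := by gcongr; exact hlip _ _
      _ = L * t * ‖v‖ ^ 2 := by
        rw [add_sub_cancel_left, norm_smul, Real.norm_of_nonneg ht.le]; ring
  have hanti : AntitoneOn g (Set.Ici 0) :=
    antitoneOn_of_hasDerivWithinAt_nonpos (convex_Ici 0)
      (fun t _ => (hg t).continuousAt.continuousWithinAt)
      (fun t _ => (hg t).hasDerivWithinAt) hg'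
  have h01 := hanti Set.self_mem_Ici (Set.mem_Ici.mpr zero_le_one) zero_le_one
  simp only [g, v, one_smul, zero_smul, add_zero, add_sub_cancel, one_mul, zero_mul, one_pow,
    sub_zero, zero_pow two_ne_zero, mul_zero] at h01
  linarith

end Descent

section PreconditionedStep

variable {E : Type*} [NormedAddCommGroup E] [InnerProductSpace ℝ E]

theorem inner_neg_symm_sub_le {Δ : E ≃ₗ[ℝ] E} {μ ε : ℝ} (hΔ : ∀ v, μ * ‖v‖ ^ 2 ≤ ⟪Δ v, v⟫)
    {g e : E} (he : ‖e‖ ≤ ε) :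
    ⟪g, -Δ.symm (g - e)⟫ ≤ ε * ‖Δ.symm (g - e)‖ - μ * ‖Δ.symm (g - e)‖ ^ 2 := by
  set d := Δ.symm (g - e)
  have hg : g = e + Δ d := by simp [d]
  have he_d : -⟪e, d⟫ ≤ ε * ‖d‖ :=
    (neg_le.mp (neg_le_of_abs_le (abs_real_inner_le_norm e d))).trans
      (mul_le_mul_of_nonneg_right he (norm_nonneg d))
  rw [hg, inner_neg_right, inner_add_left]
  linarith [hΔ d]

theorem apply_preconditioned_gradient_step_le [CompleteSpace E] {J : E → ℝ} {L μ ε : ℝ}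
    (hJ : Differentiable ℝ J) (hlip : ∀ x y, ‖∇ J x - ∇ J y‖ ≤ L * ‖x - y‖)
    {Δ : E ≃ₗ[ℝ] E} (hΔ : ∀ v, μ * ‖v‖ ^ 2 ≤ ⟪Δ v, v⟫) {e : E} (he : ‖e‖ ≤ ε)
    {x x' : E} (hx' : x' = x - Δ.symm (∇ J x - e)) :
    J x' ≤ J x - ((μ - L / 2) * ‖x' - x‖ ^ 2 - ε * ‖x' - x‖) := by
  have hstep : x' - x = -Δ.symm (∇ J x - e) := by rw [hx']; abel
  have hinner := inner_neg_symm_sub_le (g := ∇ J x) hΔ he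
  have hnorm : ‖Δ.symm (∇ J x - e)‖ = ‖x' - x‖ := by rw [hstep, norm_neg]
  rw [← hstep, hnorm] at hinner
  linarith [le_add_inner_gradient_add_of_lipschitz_gradient hJ hlip x x']

end PreconditionedStep

theorem newton_iteration_telescoping_bound_general
    {E : Type*} [NormedAddCommGroup E] [InnerProductSpace ℝ E] [FiniteDimensional ℝ E]
    (J : E → ℝ) (L : ℝ)
    (hJd : Differentiable ℝ J)
    (hlip : ∀ x y : E, ‖gradient J x - gradient J y‖ ≤ L * ‖x - y‖)
    (hbdd : BddBelow (Set.range J))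
    (η : ℝ) (hη : 0 < η)
    (θ : ℕ → E) (Δ : ℕ → E ≃ₗ[ℝ] E) (e : ℕ → E) (ε : ℝ)
    (hlower : ∀ m, ∀ v : E, (1 / η) * ‖v‖ ^ 2 ≤ ⟪Δ m v, v⟫)
    (herr : ∀ m, ‖e m‖ ≤ ε)
    (hupd : ∀ m, θ (m + 1) = θ m - (Δ m).symm (gradient J (θ m) - e m)) :
    ∀ M : ℕ, 1 ≤ M →
      ∑ m ∈ Finset.Icc 1 M,
          (((2 - L * η) / (2 * η)) * ‖θ (m + 1) - θ m‖ ^ 2 - ε * ‖θ (m + 1) - θ m‖)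
        ≤ J (θ 1) - sInf (Set.range J) := by
  intro M hM
  have hcoef : (2 - L * η) / (2 * η) = 1 / η - L / 2 := by field_simp
  have hdecrease : ∀ m, (1 / η - L / 2) * ‖θ (m + 1) - θ m‖ ^ 2 - ε * ‖θ (m + 1) - θ m‖
      ≤ J (θ m) - J (θ (m + 1)) := fun m => by
    linarith [apply_preconditioned_gradient_step_le hJd hlip (hlower m) (herr m) (hupd m)]
  calc _ ≤ ∑ m ∈ Icc 1 M, (J (θ m) - J (θ (m + 1))) := by
        rw [hcoef]; exact sum_le_sum fun m _ => hdecrease m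
    _ = J (θ 1) - J (θ (M + 1)) := by
        rw [← neg_sub, ← sum_Icc_sub hM (fun m => J (θ m))]
        simp only [neg_sub, ← sum_neg_distrib]
    _ ≤ J (θ 1) - sInf (Set.range J) := by
        gcongr; exact csInf_le hbdd ⟨_, rfl⟩

/-- Telescoping bound (key step in Theorem 1): summing the per-iteration decrease bound
of Proposition 2 over `m = 1, …, M` gives
`∑_{m=1}^M [((2−Lη)/(2η))‖γ^m‖² − ε̄‖γ^m‖] ≤ J(θ¹) − inf J`. -/
theorem newton_iteration_telescoping_bound
    {E : Type*} [NormedAddCommGroup E] [InnerProductSpace ℝ E] [FiniteDimensional ℝ E]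
    (J : E → ℝ) (L : ℝ) (hL : 0 < L)
    (hJd : Differentiable ℝ J)
    (hlip : ∀ x y : E, ‖gradient J x - gradient J y‖ ≤ L * ‖x - y‖)
    (hbdd : BddBelow (Set.range J))
    (η : ℝ) (hη : 0 < η)
    (θ : ℕ → E) (Δ : ℕ → E ≃ₗ[ℝ] E) (e : ℕ → E) (ε : ℝ) (hε : 0 ≤ ε)
    (hsym : ∀ m, ∀ u v : E, ⟪Δ m u, v⟫ = ⟪u, Δ m v⟫)
    (hlower : ∀ m, ∀ v : E, (1 / η) * ‖v‖ ^ 2 ≤ ⟪Δ m v, v⟫)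
    (herr : ∀ m, ‖e m‖ ≤ ε)
    (hupd : ∀ m, θ (m + 1) = θ m - (Δ m).symm (gradient J (θ m) - e m)) :
    ∀ M : ℕ, 1 ≤ M →
      ∑ m ∈ Finset.Icc 1 M,
          (((2 - L * η) / (2 * η)) * ‖θ (m + 1) - θ m‖ ^ 2 - ε * ‖θ (m + 1) - θ m‖)
        ≤ J (θ 1) - sInf (Set.range J) :=
  newton_iteration_telescoping_bound_general J L hJd hlip hbdd η hη θ Δ e ε hlower herr hupd
end

section
/- (Sequential form of Theorem 1(i).) Let E be a finite-dimensional real inner product space and J : E → ℝ be differentiable with L-Lipschitz gradient (L > 0) and bounded from below. Let η > 0 with 2 − Lη > 0. Let (θ^m)_{m≥1} be generated by θ^{m+1} = θ^m − (Δ^m)⁻¹(∇J(θ^m) − e^m), where each Δ^m is an invertible symmetric linear map with (1/η)‖v‖² ≤ ⟨Δ^m v, v⟩ and ‖Δ^m v‖ ≤ L‖v‖ for all v, and ‖e^m‖ ≤ ε̄ for all m with ε̄ ≥ 0. Then liminf_{m→∞} ‖∇J(θ^m)‖ ≤ ((2 + Lη)/(2 − Lη)) ε̄. -/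
/-!
Along the step `d = θ^m - θ^{m+1}` the descent lemma and the lower curvature bound give
`J(θ^{m+1}) ≤ J(θ^m) - ‖d‖ ((1/η - L/2) ‖d‖ - ε̄)`, while the upper bound on `Δ^m` gives
`‖∇J(θ^m)‖ ≤ L ‖d‖ + ε̄`. With `a = 1/η - L/2 > 0` the constant is `c₁ = 1 + L/a`, so if
`‖∇J(θ^m)‖` eventually stayed above some `ρ > c₁ ε̄`, every step would satisfy
`‖d‖ ≥ (ρ - ε̄)/L > ε̄/a` and `J` would drop by a fixed positive amount per step, contradicting
boundedness from below.
-/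

open Filter Set
open scoped RealInnerProductSpace

section
variable {E : Type*} [NormedAddCommGroup E] [InnerProductSpace ℝ E] [CompleteSpace E]
  {f : E → ℝ} {L : ℝ}

theorem Differentiable.le_add_inner_gradient_of_lipschitz (hf : Differentiable ℝ f)
    (hlip : ∀ x y, ‖gradient f x - gradient f y‖ ≤ L * ‖x - y‖) (x y : E) :
    f y ≤ f x + ⟪gradient f x, y - x⟫ + L / 2 * ‖y - x‖ ^ 2 := by
  set d := y - x
  let g : ℝ → ℝ := fun t => f (x + t • d) - t * ⟪gradient f x, d⟫ - L / 2 * t ^ 2 * ‖d‖ ^ 2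
  have hg : ∀ t, HasDerivAt g
      (⟪gradient f (x + t • d), d⟫ - ⟪gradient f x, d⟫ - L * t * ‖d‖ ^ 2) t := by
    intro t
    have hline : HasDerivAt (fun t : ℝ => x + t • d) d t := by
      simpa using ((hasDerivAt_id t).smul_const d).const_add x
    have hfline : HasDerivAt (fun t : ℝ => f (x + t • d)) ⟪gradient f (x + t • d), d⟫ t :=
      (hf _).hasGradientAt.hasFDerivAt.comp_hasDerivAt t hline
    have hquad : HasDerivAt (fun t : ℝ => L / 2 * t ^ 2 * ‖d‖ ^ 2) (L * t * ‖d‖ ^ 2) t :=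
      (((hasDerivAt_pow 2 t).const_mul (L / 2)).mul_const (‖d‖ ^ 2)).congr_deriv
        (by norm_num only [pow_one]; ring)
    exact (hfline.sub (hasDerivAt_mul_const _)).sub hquad
  have hg' : ∀ t ∈ interior (Ici (0 : ℝ)),
      ⟪gradient f (x + t • d), d⟫ - ⟪gradient f x, d⟫ - L * t * ‖d‖ ^ 2 ≤ 0 := by
    intro t ht
    rw [interior_Ici, mem_Ioi] at ht
    have := calc ⟪gradient f (x + t • d), d⟫ - ⟪gradient f x, d⟫
        = ⟪gradient f (x + t • d) - gradient f x, d⟫ := (inner_sub_left _ _ _).symm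
      _ ≤ ‖gradient f (x + t • d) - gradient f x‖ * ‖d‖ := real_inner_le_norm _ _
      _ ≤ L * ‖x + t • d - x‖ * ‖d‖ := by gcongr; exact hlip _ _
      _ = L * t * ‖d‖ ^ 2 := by
        rw [add_sub_cancel_left, norm_smul, Real.norm_of_nonneg ht.le]; ring
    linarith
  have hanti := antitoneOn_of_hasDerivWithinAt_nonpos (convex_Ici 0)
    (fun t _ => (hg t).continuousAt.continuousWithinAt) (fun t _ => (hg t).hasDerivWithinAt) hg'
  have h10 : g 1 ≤ g 0 := hanti self_mem_Ici (mem_Ici.2 zero_le_one) zero_le_one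
  simp only [g, d, one_smul, zero_smul, add_zero, add_sub_cancel] at h10
  linarith

theorem Differentiable.le_sub_of_le_inner_gradient_sub (hf : Differentiable ℝ f)
    (hlip : ∀ x y, ‖gradient f x - gradient f y‖ ≤ L * ‖x - y‖) {x d e : E} {μ ε : ℝ}
    (hd : μ * ‖d‖ ^ 2 ≤ ⟪gradient f x - e, d⟫) (he : ‖e‖ ≤ ε) :
    f (x - d) ≤ f x - ‖d‖ * ((μ - L / 2) * ‖d‖ - ε) := by
  have hdesc := hf.le_add_inner_gradient_of_lipschitz hlip x (x - d)
  rw [sub_sub_cancel_left, inner_neg_right, norm_neg] at hdesc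
  have hed : -(ε * ‖d‖) ≤ ⟪e, d⟫ := calc
    -(ε * ‖d‖) ≤ -(‖e‖ * ‖d‖) := by gcongr
    _ ≤ ⟪e, d⟫ := neg_le_of_abs_le (abs_real_inner_le_norm e d)
  rw [inner_sub_left] at hd
  linarith

theorem Differentiable.preconditioned_step_le (hf : Differentiable ℝ f)
    (hlip : ∀ x y, ‖gradient f x - gradient f y‖ ≤ L * ‖x - y‖) (hL : 0 < L)
    {Δ : E ≃ₗ[ℝ] E} {μ : ℝ} (hlower : ∀ v, μ * ‖v‖ ^ 2 ≤ ⟪Δ v, v⟫)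
    (hupper : ∀ v, ‖Δ v‖ ≤ L * ‖v‖) (hμ : L / 2 ≤ μ) {x e : E} {ε r : ℝ} (he : ‖e‖ ≤ ε)
    (hr : ε ≤ (μ - L / 2) * r) (hx : L * r + ε ≤ ‖gradient f x‖) :
    f (x - Δ.symm (gradient f x - e)) ≤ f x - r * ((μ - L / 2) * r - ε) := by
  set d := Δ.symm (gradient f x - e)
  have hΔd : Δ d = gradient f x - e := Δ.apply_symm_apply _
  have hrd : r ≤ ‖d‖ := by
    refine le_of_mul_le_mul_left ?_ hL
    calc L * r ≤ ‖gradient f x‖ - ‖e‖ := by linarith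
      _ ≤ ‖Δ d‖ := by rw [hΔd]; exact norm_sub_norm_le _ _
      _ ≤ L * ‖d‖ := hupper d
  calc f (x - d) ≤ f x - ‖d‖ * ((μ - L / 2) * ‖d‖ - ε) :=
      hf.le_sub_of_le_inner_gradient_sub hlip (hΔd ▸ hlower d) he
    _ ≤ f x - r * ((μ - L / 2) * r - ε) := by
      gcongr f x - ?_
      exact mul_le_mul hrd (by gcongr) (by linarith) (norm_nonneg _)

end

theorem not_eventually_le_sub_of_bddBelow {u : ℕ → ℝ} (hu : BddBelow (range u)) {κ : ℝ}
    (hκ : 0 < κ) : ¬ ∀ᶠ m in atTop, u (m + 1) ≤ u m - κ := by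
  intro h
  obtain ⟨N, hN⟩ := eventually_atTop.1 h
  obtain ⟨B, hB⟩ := hu
  have hdecay : ∀ k : ℕ, u (N + k) ≤ u N - k * κ := by
    intro k
    induction k with
    | zero => simp
    | succ k ih => rw [← add_assoc]; push_cast; linarith [hN (N + k) (Nat.le_add_right N k)]
  obtain ⟨k, hk⟩ := exists_nat_gt ((u N - B) / κ)
  rw [div_lt_iff₀ hκ] at hk
  linarith [hdecay k, hB (mem_range_self (N + k))]

theorem liminf_grad_norm_le_general
    {E : Type*} [NormedAddCommGroup E] [InnerProductSpace ℝ E] [FiniteDimensional ℝ E]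
    (J : E → ℝ) (L : ℝ) (hL : 0 < L)
    (hJd : Differentiable ℝ J)
    (hlip : ∀ x y : E, ‖gradient J x - gradient J y‖ ≤ L * ‖x - y‖)
    (hbdd : BddBelow (Set.range J))
    (η : ℝ) (hη : 0 < η) (hLη : 0 < 2 - L * η)
    (θ : ℕ → E) (Δ : ℕ → E ≃ₗ[ℝ] E) (e : ℕ → E) (ε : ℝ)
    (hlower : ∀ m, ∀ v : E, (1 / η) * ‖v‖ ^ 2 ≤ ⟪Δ m v, v⟫)
    (hupper : ∀ m, ∀ v : E, ‖Δ m v‖ ≤ L * ‖v‖)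
    (herr : ∀ m, ‖e m‖ ≤ ε)
    (hupd : ∀ m, θ (m + 1) = θ m - (Δ m).symm (gradient J (θ m) - e m)) :
    Filter.liminf (fun m => ‖gradient J (θ m)‖) Filter.atTop ≤
      ((2 + L * η) / (2 - L * η)) * ε := by
  have hε : 0 ≤ ε := (norm_nonneg _).trans (herr 0)
  set a := 1 / η - L / 2 with ha_def
  have ha : 0 < a := by rw [ha_def, sub_pos, div_lt_div_iff₀ two_pos hη]; linarith
  have hc : (2 + L * η) / (2 - L * η) = 1 + L / a := by
    rw [ha_def]; field_simp; ring
  refine le_of_forall_gt_imp_ge_of_dense fun ρ hρ => liminf_le_of_frequently_le ?_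
    (isBoundedUnder_of ⟨0, fun m => norm_nonneg _⟩)
  set r := (ρ - ε) / L
  have hr : ε < a * r := by
    rw [hc, add_mul, one_mul, ← lt_sub_iff_add_lt', div_mul_eq_mul_div, div_lt_iff₀ ha] at hρ
    rw [mul_div_assoc', lt_div_iff₀ hL]
    linarith
  have hr0 : 0 < r := pos_of_mul_pos_right (hε.trans_lt hr) ha.le
  refine fun hlarge => not_eventually_le_sub_of_bddBelow (hbdd.mono (range_comp_subset_range θ J))
    (mul_pos hr0 (sub_pos.2 hr)) ?_
  filter_upwards [hlarge] with m hm
  rw [Function.comp_apply, Function.comp_apply, hupd]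
  refine hJd.preconditioned_step_le hlip hL (hlower m) (hupper m) (by linarith) (herr m) hr.le ?_
  rw [mul_div_cancel₀ _ hL.ne']
  linarith [not_le.1 hm]

/-- Sequential form of Theorem 1(i): for the S2E Newton-type iteration
`θ^{m+1} = θ^m − (Δ^m)⁻¹(∇J(θ^m) − e^m)` with `(1/η)‖v‖² ≤ ⟪Δ^m v, v⟫`, `‖Δ^m v‖ ≤ L‖v‖`,
and `‖e^m‖ ≤ ε̄`, `liminf_m ‖∇J(θ^m)‖ ≤ ((2 + Lη)/(2 − Lη)) ε̄`. -/
theorem liminf_grad_norm_le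
    {E : Type*} [NormedAddCommGroup E] [InnerProductSpace ℝ E] [FiniteDimensional ℝ E]
    (J : E → ℝ) (L : ℝ) (hL : 0 < L)
    (hJd : Differentiable ℝ J)
    (hlip : ∀ x y : E, ‖gradient J x - gradient J y‖ ≤ L * ‖x - y‖)
    (hbdd : BddBelow (Set.range J))
    (η : ℝ) (hη : 0 < η) (hLη : 0 < 2 - L * η)
    (θ : ℕ → E) (Δ : ℕ → E ≃ₗ[ℝ] E) (e : ℕ → E) (ε : ℝ) (hε : 0 ≤ ε)
    (hsym : ∀ m, ∀ u v : E, ⟪Δ m u, v⟫ = ⟪u, Δ m v⟫)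
    (hlower : ∀ m, ∀ v : E, (1 / η) * ‖v‖ ^ 2 ≤ ⟪Δ m v, v⟫)
    (hupper : ∀ m, ∀ v : E, ‖Δ m v‖ ≤ L * ‖v‖)
    (herr : ∀ m, ‖e m‖ ≤ ε)
    (hupd : ∀ m, θ (m + 1) = θ m - (Δ m).symm (gradient J (θ m) - e m)) :
    Filter.liminf (fun m => ‖gradient J (θ m)‖) Filter.atTop ≤
      ((2 + L * η) / (2 - L * η)) * ε :=
  liminf_grad_norm_le_general J L hL hJd hlip hbdd η hη hLη θ Δ e ε hlower hupper herr hupd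
end

section
/- (Theorem 1(i).) Let E be a finite-dimensional real inner product space and J : E → ℝ be differentiable with L-Lipschitz gradient (L > 0) and bounded from below. Let η > 0 with 2 − Lη > 0. Let (θ^m)_{m≥1} be a bounded sequence generated by θ^{m+1} = θ^m − (Δ^m)⁻¹(∇J(θ^m) − e^m), where each Δ^m is an invertible symmetric linear map with (1/η)‖v‖² ≤ ⟨Δ^m v, v⟩ and ‖Δ^m v‖ ≤ L‖v‖ for all v, and ‖e^m‖ ≤ ε̄ for all m with ε̄ ≥ 0. Then there exists a limit point θ̄ of the sequence (θ^m) (i.e., the limit of some convergent subsequence) such that ‖∇J(θ̄)‖ ≤ c₁ ε̄ with c₁ = (2 + Lη)/(2 − Lη). -/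
/-! A step `d = θ^{m+1} - θ^m` satisfies `Δ^m d = e^m - ∇J(θ^m)`. Combined with the descent lemma
for the `L`-smooth `J` and `⟪Δ^m d, d⟫ ≥ ‖d‖² / η`, it decreases `J` by at least
`α ‖d‖² - ε̄ ‖d‖`, where `α = 1/η - L/2 > 0`. As `J` is bounded below, for every `r > 0` infinitely
many steps have `‖d‖ < ε̄/α + r`, and there `‖∇J(θ^m)‖ ≤ ε̄ + L ‖d‖ < c₁ ε̄ + L r`. A convergent
subsequence of these iterates (Bolzano–Weierstrass) and continuity of `∇J` give the limit point. -/

open Filter Set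
open scoped RealInnerProductSpace Topology

theorem le_add_inner_gradient_add_sq_of_gradient_lipschitz
    {E : Type*} [NormedAddCommGroup E] [InnerProductSpace ℝ E] [CompleteSpace E]
    {J : E → ℝ} {L : ℝ} (hJd : Differentiable ℝ J)
    (hlip : ∀ x y : E, ‖gradient J x - gradient J y‖ ≤ L * ‖x - y‖) (x y : E) :
    J y ≤ J x + ⟪gradient J x, y - x⟫ + L / 2 * ‖y - x‖ ^ 2 := by
  set v := y - x
  set φ : ℝ → ℝ := fun t => J (x + t • v) - t * ⟪gradient J x, v⟫ - L / 2 * t ^ 2 * ‖v‖ ^ 2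
  have hφ : ∀ t : ℝ, HasDerivAt φ
      (⟪gradient J (x + t • v), v⟫ - ⟪gradient J x, v⟫ - L * t * ‖v‖ ^ 2) t := by
    intro t
    have hpath : HasDerivAt (fun t : ℝ => x + t • v) v t := by
      simpa using ((hasDerivAt_id t).smul_const v).const_add x
    have hJ := (hJd (x + t • v)).hasGradientAt.hasFDerivAt.comp_hasDerivAt t hpath
    simp only [InnerProductSpace.toDual_apply_apply] at hJ
    refine ((hJ.sub ((hasDerivAt_id t).mul_const ⟪gradient J x, v⟫)).sub
      (((hasDerivAt_pow 2 t).const_mul (L / 2)).mul_const (‖v‖ ^ 2))).congr_deriv ?_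
    simp only [one_mul, Nat.cast_ofNat]
    ring
  have hanti : AntitoneOn φ (Ici 0) := by
    refine antitoneOn_of_hasDerivWithinAt_nonpos (convex_Ici 0)
      (fun t _ => (hφ t).continuousAt.continuousWithinAt) (fun t _ => (hφ t).hasDerivWithinAt) ?_
    intro t ht
    rw [interior_Ici, mem_Ioi] at ht
    have hgrad_sub : ‖gradient J (x + t • v) - gradient J x‖ ≤ L * t * ‖v‖ := by
      simpa [norm_smul, abs_of_pos ht, mul_assoc] using hlip (x + t • v) x
    have := real_inner_le_norm (gradient J (x + t • v) - gradient J x) v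
    rw [inner_sub_left] at this
    linarith [mul_le_mul_of_nonneg_right hgrad_sub (norm_nonneg v)]
  have h01 : φ 1 ≤ φ 0 := hanti self_mem_Ici (mem_Ici.mpr zero_le_one) zero_le_one
  simp only [φ, one_smul, zero_smul, add_zero, one_mul, one_pow, zero_mul, mul_zero, sub_zero,
    zero_pow two_ne_zero, v, add_sub_cancel] at h01
  linarith

theorem norm_le_add_mul_of_apply_eq_sub {E : Type*} [NormedAddCommGroup E] [NormedSpace ℝ E]
    {Δ : E →ₗ[ℝ] E} {L : ℝ} {d e g : E} (hupper : ‖Δ d‖ ≤ L * ‖d‖) (h : Δ d = e - g) :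
    ‖g‖ ≤ ‖e‖ + L * ‖d‖ :=
  calc ‖g‖ = ‖e - Δ d‖ := by rw [h, sub_sub_cancel]
    _ ≤ ‖e‖ + ‖Δ d‖ := norm_sub_le _ _
    _ ≤ ‖e‖ + L * ‖d‖ := by gcongr

theorem mul_sq_sub_le_sub_of_apply_eq_sub_gradient
    {E : Type*} [NormedAddCommGroup E] [InnerProductSpace ℝ E] [CompleteSpace E]
    {J : E → ℝ} {L η : ℝ} (hJd : Differentiable ℝ J)
    (hlip : ∀ x y : E, ‖gradient J x - gradient J y‖ ≤ L * ‖x - y‖)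
    {Δ : E →ₗ[ℝ] E} {x x' e : E} (hlower : (1 / η) * ‖x' - x‖ ^ 2 ≤ ⟪Δ (x' - x), x' - x⟫)
    (h : Δ (x' - x) = e - gradient J x) :
    (1 / η - L / 2) * ‖x' - x‖ ^ 2 - ‖e‖ * ‖x' - x‖ ≤ J x - J x' := by
  have hdesc := le_add_inner_gradient_add_sq_of_gradient_lipschitz hJd hlip x x'
  have hinner : ⟪gradient J x, x' - x⟫ = ⟪e, x' - x⟫ - ⟪Δ (x' - x), x' - x⟫ := by
    rw [h, inner_sub_left, sub_sub_cancel]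
  have he := real_inner_le_norm e (x' - x)
  linarith

theorem frequently_lt_of_le_sub_of_bddBelow {u c : ℕ → ℝ} (hu : BddBelow (range u))
    (hdec : ∀ m, u (m + 1) ≤ u m - c m) {δ : ℝ} (hδ : 0 < δ) : ∃ᶠ m in atTop, c m < δ := by
  by_contra hc
  obtain ⟨N, hN⟩ := eventually_atTop.1 (not_frequently.1 hc)
  have hlin : ∀ j : ℕ, u (N + j) ≤ u N - j * δ := by
    intro j
    induction j with
    | zero => simp
    | succ j ih =>
      have := hdec (N + j)
      have := not_lt.1 (hN (N + j) (Nat.le_add_right N j))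
      rw [← add_assoc]
      push_cast
      linarith
  obtain ⟨B, hB⟩ := hu
  obtain ⟨j, hj⟩ := exists_nat_gt ((u N - B) / δ)
  have := hB (mem_range_self (N + j))
  have := (div_lt_iff₀ hδ).1 hj
  linarith [hlin j]

theorem frequently_lt_add_of_le_sub_mul_sq {u s : ℕ → ℝ} {α ε r : ℝ} (hu : BddBelow (range u))
    (hdec : ∀ m, u (m + 1) ≤ u m - (α * s m ^ 2 - ε * s m)) (hα : 0 < α) (hε : 0 ≤ ε)
    (hr : 0 < r) : ∃ᶠ m in atTop, s m < ε / α + r := by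
  refine (frequently_lt_of_le_sub_of_bddBelow hu hdec
    (show 0 < (ε / α + r) * (α * r) by positivity)).mono fun m hm => ?_
  by_contra! hs
  have hgap : α * r ≤ α * s m - ε := by
    have := mul_le_mul_of_nonneg_left hs hα.le
    rw [mul_add, mul_div_cancel₀ ε hα.ne'] at this
    linarith
  have := mul_le_mul hs hgap (by positivity) ((by positivity : 0 ≤ ε / α + r).trans hs)
  linarith

theorem exists_subseq_tendsto_le_of_frequently_lt {X : Type*} [PseudoMetricSpace X]
    [ProperSpace X] {f : X → ℝ} (hf : Continuous f) {θ : ℕ → X}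
    (hθ : Bornology.IsBounded (range θ)) {b : ℝ} (h : ∀ r > 0, ∃ᶠ m in atTop, f (θ m) < b + r) :
    ∃ x, (∃ φ : ℕ → ℕ, StrictMono φ ∧ Tendsto (θ ∘ φ) atTop (𝓝 x)) ∧ f x ≤ b := by
  obtain ⟨φ, hφ, hφlt⟩ := extraction_forall_of_frequently fun n : ℕ =>
    h (1 / (n + 1 : ℝ)) (by positivity)
  obtain ⟨x, -, ψ, hψ, hlim⟩ := tendsto_subseq_of_bounded hθ fun n => mem_range_self (φ n)
  refine ⟨x, ⟨φ ∘ ψ, hφ.comp hψ, hlim⟩, ?_⟩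
  have hbound : Tendsto (fun n => b + 1 / ((ψ n : ℝ) + 1)) atTop (𝓝 (b + 0)) :=
    tendsto_const_nhds.add (tendsto_one_div_add_atTop_nhds_zero_nat.comp hψ.tendsto_atTop)
  rw [add_zero] at hbound
  exact le_of_tendsto_of_tendsto' ((hf.tendsto x).comp hlim) hbound fun n => (hφlt (ψ n)).le

theorem exists_limit_point_grad_norm_le_general
    {E : Type*} [NormedAddCommGroup E] [InnerProductSpace ℝ E] [FiniteDimensional ℝ E]
    (J : E → ℝ) (L : ℝ) (hL : 0 < L)
    (hJd : Differentiable ℝ J)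
    (hlip : ∀ x y : E, ‖gradient J x - gradient J y‖ ≤ L * ‖x - y‖)
    (hbdd : BddBelow (Set.range J))
    (η : ℝ) (hη : 0 < η) (hLη : 0 < 2 - L * η)
    (θ : ℕ → E) (hθbdd : Bornology.IsBounded (Set.range θ))
    (Δ : ℕ → E ≃ₗ[ℝ] E) (e : ℕ → E) (ε : ℝ) (hε : 0 ≤ ε)
    (hlower : ∀ m, ∀ v : E, (1 / η) * ‖v‖ ^ 2 ≤ ⟪Δ m v, v⟫)
    (hupper : ∀ m, ∀ v : E, ‖Δ m v‖ ≤ L * ‖v‖)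
    (herr : ∀ m, ‖e m‖ ≤ ε)
    (hupd : ∀ m, θ (m + 1) = θ m - (Δ m).symm (gradient J (θ m) - e m)) :
    ∃ θbar : E,
      (∃ φ : ℕ → ℕ, StrictMono φ ∧ Tendsto (θ ∘ φ) atTop (nhds θbar)) ∧
        ‖gradient J θbar‖ ≤ ((2 + L * η) / (2 - L * η)) * ε := by
  have hα : 0 < 1 / η - L / 2 := by
    have : 1 / η - L / 2 = (2 - L * η) / (2 * η) := by field_simp
    rw [this]
    positivity
  have hstep : ∀ m, (Δ m : E →ₗ[ℝ] E) (θ (m + 1) - θ m) = e m - gradient J (θ m) := by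
    intro m
    rw [hupd m, sub_sub_cancel_left, LinearEquiv.coe_coe, map_neg,
      LinearEquiv.apply_symm_apply, neg_sub]
  have hdec : ∀ m, J (θ (m + 1)) ≤ J (θ m) -
      ((1 / η - L / 2) * ‖θ (m + 1) - θ m‖ ^ 2 - ε * ‖θ (m + 1) - θ m‖) := fun m => by
    have := mul_sq_sub_le_sub_of_apply_eq_sub_gradient hJd hlip (hlower m _) (hstep m)
    have := mul_le_mul_of_nonneg_right (herr m) (norm_nonneg (θ (m + 1) - θ m))
    linarith
  have hgrad : Continuous (gradient J) :=
    (LipschitzWith.of_dist_le' (by simpa only [dist_eq_norm] using hlip)).continuous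
  refine exists_subseq_tendsto_le_of_frequently_lt hgrad.norm hθbdd fun r hr => ?_
  refine (frequently_lt_add_of_le_sub_mul_sq (hbdd.mono (range_comp_subset_range θ J)) hdec hα hε
    (div_pos hr hL)).mono fun m hm => ?_
  calc ‖gradient J (θ m)‖ ≤ ‖e m‖ + L * ‖θ (m + 1) - θ m‖ :=
        norm_le_add_mul_of_apply_eq_sub (hupper m _) (hstep m)
    _ < ε + L * (ε / (1 / η - L / 2) + r / L) :=
        add_lt_add_of_le_of_lt (herr m) (mul_lt_mul_of_pos_left hm hL)
    _ = (2 + L * η) / (2 - L * η) * ε + r := by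
        field_simp
        ring

/-- Theorem 1(i): for a bounded sequence generated by the S2E Newton-type iteration
`θ^{m+1} = θ^m − (Δ^m)⁻¹(∇J(θ^m) − e^m)`, there exists a limit point `θ̄` (limit of a
convergent subsequence) with `‖∇J(θ̄)‖ ≤ c₁ ε̄`, where `c₁ = (2 + Lη)/(2 − Lη)`. -/
theorem exists_limit_point_grad_norm_le
    {E : Type*} [NormedAddCommGroup E] [InnerProductSpace ℝ E] [FiniteDimensional ℝ E]
    (J : E → ℝ) (L : ℝ) (hL : 0 < L)
    (hJd : Differentiable ℝ J)
    (hlip : ∀ x y : E, ‖gradient J x - gradient J y‖ ≤ L * ‖x - y‖)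
    (hbdd : BddBelow (Set.range J))
    (η : ℝ) (hη : 0 < η) (hLη : 0 < 2 - L * η)
    (θ : ℕ → E) (hθbdd : Bornology.IsBounded (Set.range θ))
    (Δ : ℕ → E ≃ₗ[ℝ] E) (e : ℕ → E) (ε : ℝ) (hε : 0 ≤ ε)
    (hsym : ∀ m, ∀ u v : E, ⟪Δ m u, v⟫ = ⟪u, Δ m v⟫)
    (hlower : ∀ m, ∀ v : E, (1 / η) * ‖v‖ ^ 2 ≤ ⟪Δ m v, v⟫)
    (hupper : ∀ m, ∀ v : E, ‖Δ m v‖ ≤ L * ‖v‖)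
    (herr : ∀ m, ‖e m‖ ≤ ε)
    (hupd : ∀ m, θ (m + 1) = θ m - (Δ m).symm (gradient J (θ m) - e m)) :
    ∃ θbar : E,
      (∃ φ : ℕ → ℕ, StrictMono φ ∧ Tendsto (θ ∘ φ) atTop (nhds θbar)) ∧
        ‖gradient J θbar‖ ≤ ((2 + L * η) / (2 - L * η)) * ε :=
  exists_limit_point_grad_norm_le_general J L hL hJd hlip hbdd η hη hLη θ hθbdd Δ e ε hε hlower
    hupper herr hupd
end
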